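/- arXiv:1503.04995 — 5 statements merged into one kernel-verified Lean document; each statement's English description precedes it below -/
import Mathlib

section
/- There exists a constant C > 0 with the following property. For every α ∈ (0, π/2], set q₁ := (1,0,0), q₂ := (cos α, sin α, 0), Q := {q₁, −q₁, q₂, −q₂}, and define G : ℝ³ → [0,∞) by G(0) := 0 and G(x) := dist(x/‖x‖, Q) for x ≠ 0. Then there exist T > 0 and a twice continuously differentiable map u : ℝ → ℝ³ with ‖u(t)‖ = 1 for all t, whose chirality w := u × u' satisfies w(t) = q₁ for every t ≤ 0, w(t) = q₂ for every t ≥ T, and ∫_ℝ [(‖w(t)‖² − 1)² + G(w(t))/2 + ‖w'(t)‖²] dt ≤ C·‖q₁ − q₂‖. (Hence the soft-penalized transition energy h_G(q₁,q₂) is at most C‖q₁ − q₂‖, uniformly in α.) -/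
open MeasureTheory Filter
open scoped Classical
open scoped RealInnerProductSpace

noncomputable def cross3 (a b : EuclideanSpace ℝ (Fin 3)) : EuclideanSpace ℝ (Fin 3) :=
  (WithLp.equiv 2 (Fin 3 → ℝ)).symm
    (crossProduct ((WithLp.equiv 2 (Fin 3 → ℝ)) a) ((WithLp.equiv 2 (Fin 3 → ℝ)) b))

/-!
With `rotE₁ θ = (cos θ, sin θ, 0)`, so that `q₁ = rotE₁ 0` and `q₂ = rotE₁ α`, the spin field
rotates at unit speed along the great circle orthogonal to `rotE₁ (β t)`, where the angle `β`
climbs smoothly from `0` to `α` during `t ∈ [1, 2]`. Its chirality is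
`u × u' = rotE₁ β + β' • (e₃ - sin t • u)`; since `β`, `β'`, `β''` are all `O(α)`, the chirality
stays within `O(α)` of `q₁` and its derivative is `O(α)`. Each term of the energy density is
controlled by these two quantities, so the density is `O(α)` and supported in `[1, 2]`. Jordan's
inequality gives `α ≤ 2 ‖q₁ - q₂‖`.
-/

open Real Topology

local notation "ℝ³" => EuclideanSpace ℝ (Fin 3)

namespace SpinTransition

section Energy

variable {E : Type*} [NormedAddCommGroup E]

lemma abs_norm_sq_sub_one_le {c : E} (hc : ‖c‖ = 1) (w : E) :
    |‖w‖ ^ 2 - 1| ≤ ‖w - c‖ * (2 + ‖w - c‖) := by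
  have h := abs_norm_sub_norm_le w c
  rw [hc] at h
  rw [show ‖w‖ ^ 2 - 1 = (‖w‖ - 1) * (‖w‖ - 1 + 2) by ring, abs_mul]
  gcongr
  exact (abs_add_le _ _).trans (by rw [abs_two]; linarith)

variable [NormedSpace ℝ E]

noncomputable def sphericalPenalty (Q : Set E) (x : E) : ℝ :=
  if x = 0 then 0 else Metric.infDist (‖x‖⁻¹ • x) Q

noncomputable def energyDensity (Q : Set E) (w w' : E) : ℝ :=
  (‖w‖ ^ 2 - 1) ^ 2 + sphericalPenalty Q w / 2 + ‖w'‖ ^ 2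

variable {Q : Set E} {c : E}

lemma norm_smul_inv_norm_sub_le (hc : ‖c‖ = 1) (w : E) : ‖‖w‖⁻¹ • w - c‖ ≤ 2 * ‖w - c‖ := by
  rcases eq_or_ne w 0 with rfl | hw
  · simp [hc]
  have hw' : ‖‖w‖⁻¹ • w - w‖ = |‖w‖ - ‖c‖| :=
    calc ‖‖w‖⁻¹ • w - w‖ = ‖(‖w‖⁻¹ - 1) • w‖ := by rw [sub_smul, one_smul]
      _ = |(‖w‖⁻¹ - 1) * ‖w‖| := by rw [norm_smul, Real.norm_eq_abs, abs_mul, abs_norm]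
      _ = |‖w‖ - ‖c‖| := by
          rw [sub_mul, inv_mul_cancel₀ (norm_ne_zero_iff.mpr hw), one_mul, abs_sub_comm, hc]
  calc ‖‖w‖⁻¹ • w - c‖ ≤ ‖‖w‖⁻¹ • w - w‖ + ‖w - c‖ := norm_sub_le_norm_sub_add_norm_sub _ _ _
    _ ≤ ‖w - c‖ + ‖w - c‖ := by rw [hw']; gcongr; exact abs_norm_sub_norm_le w c
    _ = 2 * ‖w - c‖ := by ring

lemma sphericalPenalty_le (hc : ‖c‖ = 1) (hcQ : c ∈ Q) (w : E) :
    sphericalPenalty Q w ≤ 2 * ‖w - c‖ := by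
  unfold sphericalPenalty
  split_ifs
  · positivity
  · exact (Metric.infDist_le_dist_of_mem hcQ).trans
      ((dist_eq_norm _ _).trans_le (norm_smul_inv_norm_sub_le hc w))

lemma energyDensity_self (hc : ‖c‖ = 1) (hcQ : c ∈ Q) : energyDensity Q c 0 = 0 := by
  have hc0 : c ≠ 0 := norm_ne_zero_iff.mp (by rw [hc]; exact one_ne_zero)
  simp [energyDensity, sphericalPenalty, hc, hc0, Metric.infDist_zero_of_mem hcQ]

lemma energyDensity_le (hc : ‖c‖ = 1) (hcQ : c ∈ Q) {w w' : E} {α L : ℝ} (hα0 : 0 ≤ α)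
    (hα2 : α ≤ 2) (hL : 0 ≤ L) (hw : ‖w - c‖ ≤ α * L) (hw' : ‖w'‖ ≤ α * L) :
    energyDensity Q w w' ≤ α * (2 * L ^ 2 * (2 + 2 * L) ^ 2 + L + 2 * L ^ 2) := by
  have h₁ : (‖w‖ ^ 2 - 1) ^ 2 ≤ (α * L * (2 + α * L)) ^ 2 := by
    rw [← sq_abs]
    gcongr
    exact (abs_norm_sq_sub_one_le hc w).trans (by gcongr)
  have h₂ := sphericalPenalty_le hc hcQ w
  have h₃ : ‖w'‖ ^ 2 ≤ (α * L) ^ 2 := by gcongr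
  have h₄ : (α * L * (2 + α * L)) ^ 2 ≤ α * (2 * L ^ 2 * (2 + 2 * L) ^ 2) :=
    calc (α * L * (2 + α * L)) ^ 2 = α * α * (L * (2 + α * L)) ^ 2 := by ring
      _ ≤ α * 2 * (L * (2 + 2 * L)) ^ 2 := by gcongr
      _ = α * (2 * L ^ 2 * (2 + 2 * L) ^ 2) := by ring
  have h₅ : (α * L) ^ 2 ≤ α * (2 * L ^ 2) :=
    calc (α * L) ^ 2 = α * α * L ^ 2 := by ring
      _ ≤ α * 2 * L ^ 2 := by gcongr
      _ = α * (2 * L ^ 2) := by ring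
  unfold energyDensity
  linarith

lemma lintegral_ofReal_le_of_eq_zero_off_Icc {f : ℝ → ℝ} {a b M : ℝ}
    (hM : ∀ t ∈ Set.Icc a b, f t ≤ M) (h0 : ∀ t ∉ Set.Icc a b, f t = 0) :
    ∫⁻ t, ENNReal.ofReal (f t) ≤ ENNReal.ofReal M * ENNReal.ofReal (b - a) := by
  calc ∫⁻ t, ENNReal.ofReal (f t)
        ≤ ∫⁻ t, (Set.Icc a b).indicator (fun _ => ENNReal.ofReal M) t := by
        refine lintegral_mono fun t => ?_
        by_cases ht : t ∈ Set.Icc a b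
        · simpa [ht] using ENNReal.ofReal_le_ofReal (hM t ht)
        · simp [ht, h0 t ht]
    _ = ENNReal.ofReal M * ENNReal.ofReal (b - a) := by
        rw [lintegral_indicator_const measurableSet_Icc, Real.volume_Icc]

end Energy

noncomputable def e₁ : ℝ³ := EuclideanSpace.single 0 1

noncomputable def e₂ : ℝ³ := EuclideanSpace.single 1 1

noncomputable def e₃ : ℝ³ := EuclideanSpace.single 2 1

noncomputable def rotE₁ (θ : ℝ) : ℝ³ := cos θ • e₁ + sin θ • e₂

noncomputable def rotE₂ (θ : ℝ) : ℝ³ := -sin θ • e₁ + cos θ • e₂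

lemma cross3_apply (a b : ℝ³) :
    cross3 a b = !₂[a 1 * b 2 - a 2 * b 1, a 2 * b 0 - a 0 * b 2, a 0 * b 1 - a 1 * b 0] := by
  ext i; fin_cases i <;> simp [cross3, cross_apply]

lemma norm_eq_sqrt (x : ℝ³) : ‖x‖ = √(x 0 ^ 2 + x 1 ^ 2 + x 2 ^ 2) := by
  simp [EuclideanSpace.norm_eq, Fin.sum_univ_three]

lemma rotE₁_eq (θ : ℝ) : rotE₁ θ = (WithLp.equiv 2 (Fin 3 → ℝ)).symm ![cos θ, sin θ, 0] := by
  ext i; fin_cases i <;> simp [rotE₁, e₁, e₂]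

lemma norm_e₃ : ‖e₃‖ = 1 := by simp [e₃]

lemma norm_rotE₁ (θ : ℝ) : ‖rotE₁ θ‖ = 1 := by simp [norm_eq_sqrt, rotE₁, e₁, e₂]

lemma norm_rotE₂ (θ : ℝ) : ‖rotE₂ θ‖ = 1 := by simp [norm_eq_sqrt, rotE₂, e₁, e₂]

lemma norm_rotE₁_sub_rotE₁ (θ φ : ℝ) : ‖rotE₁ θ - rotE₁ φ‖ = 2 * |sin ((θ - φ) / 2)| := by
  set x := (θ - φ) / 2
  rw [← abs_two, ← abs_mul, ← sqrt_sq_eq_abs, norm_eq_sqrt]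
  congr 1
  have h : cos θ * cos φ + sin θ * sin φ = 1 - 2 * sin x ^ 2 := by
    rw [← cos_sub, show θ - φ = 2 * x by ring, cos_two_mul, cos_sq']
    ring
  simp [rotE₁, e₁, e₂]
  linear_combination sin_sq_add_cos_sq θ + sin_sq_add_cos_sq φ - 2 * h

lemma norm_rotE₁_sub_rotE₁_le (θ φ : ℝ) : ‖rotE₁ θ - rotE₁ φ‖ ≤ |θ - φ| := by
  rw [norm_rotE₁_sub_rotE₁]
  calc 2 * |sin ((θ - φ) / 2)| ≤ 2 * |(θ - φ) / 2| :=
        mul_le_mul_of_nonneg_left abs_sin_le_abs zero_le_two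
    _ = |θ - φ| := by rw [abs_div, abs_two]; ring

lemma le_two_mul_norm_rotE₁_sub_rotE₁_zero {θ : ℝ} (h0 : 0 ≤ θ) (hπ : θ ≤ π) :
    θ ≤ 2 * ‖rotE₁ θ - rotE₁ 0‖ := by
  have hsin := mul_le_sin (x := θ / 2) (by positivity) (by linarith)
  have hθ : 0 ≤ 2 / π * (θ / 2) := by positivity
  have hπ4 : θ ≤ 4 * (2 / π * (θ / 2)) := by
    rw [show 4 * (2 / π * (θ / 2)) = θ * (4 / π) by ring]
    exact le_mul_of_one_le_right h0 ((one_le_div pi_pos).2 pi_le_four)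
  rw [norm_rotE₁_sub_rotE₁, sub_zero, abs_of_nonneg (hθ.trans hsin)]
  linarith

lemma hasDerivAt_rotE₁ (θ : ℝ) : HasDerivAt rotE₁ (rotE₂ θ) θ :=
  (((hasDerivAt_cos θ).smul_const e₁).add ((hasDerivAt_sin θ).smul_const e₂)).congr_deriv
    (by simp [rotE₂])

lemma hasDerivAt_rotE₂ (θ : ℝ) : HasDerivAt rotE₂ (-rotE₁ θ) θ :=
  (((hasDerivAt_sin θ).neg.smul_const e₁).add ((hasDerivAt_cos θ).smul_const e₂)).congr_deriv
    (by simp [rotE₁]; abel)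

lemma contDiff_rotE₂ {n : WithTop ℕ∞} : ContDiff ℝ n rotE₂ := by
  unfold rotE₂; fun_prop

section SpinField

variable {β : ℝ → ℝ} {t : ℝ}

noncomputable def spinField (β : ℝ → ℝ) (t : ℝ) : ℝ³ := cos t • rotE₂ (β t) + sin t • e₃

noncomputable def chirality (β : ℝ → ℝ) (t : ℝ) : ℝ³ :=
  rotE₁ (β t) + deriv β t • (e₃ - sin t • spinField β t)

lemma norm_spinField (β : ℝ → ℝ) (t : ℝ) : ‖spinField β t‖ = 1 := by
  simp [norm_eq_sqrt, spinField, rotE₂, e₁, e₂, e₃]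
  linear_combination cos t ^ 2 * sin_sq_add_cos_sq (β t) + sin_sq_add_cos_sq t

lemma contDiff_spinField {n : WithTop ℕ∞} (hβ : ContDiff ℝ n β) : ContDiff ℝ n (spinField β) := by
  unfold spinField
  have := contDiff_rotE₂.comp hβ
  fun_prop

lemma hasDerivAt_spinField {β' : ℝ} (hβ : HasDerivAt β β' t) :
    HasDerivAt (spinField β)
      (-sin t • rotE₂ (β t) - (cos t * β') • rotE₁ (β t) + cos t • e₃) t := by
  have h : HasDerivAt (fun s => rotE₂ (β s)) (β' • -rotE₁ (β t)) t :=
    (hasDerivAt_rotE₂ (β t)).scomp t hβ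
  exact (((hasDerivAt_cos t).smul h).add ((hasDerivAt_sin t).smul_const e₃)).congr_deriv
    (by simp [smul_smul]; abel)

lemma cross3_spinField_deriv (hβ : Differentiable ℝ β) (t : ℝ) :
    cross3 (spinField β t) (deriv (spinField β) t) = chirality β t := by
  rw [(hasDerivAt_spinField (hβ t).hasDerivAt).deriv, cross3_apply]
  ext i; fin_cases i <;> simp [chirality, spinField, rotE₁, rotE₂, e₁, e₂, e₃]
  · linear_combination cos (β t) * sin_sq_add_cos_sq t
  · linear_combination sin (β t) * sin_sq_add_cos_sq t
  · linear_combination deriv β t * (cos t ^ 2 * sin_sq_add_cos_sq (β t) + sin_sq_add_cos_sq t)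

lemma norm_e₃_sub_sin_smul_spinField_le : ‖e₃ - sin t • spinField β t‖ ≤ 2 := by
  calc ‖e₃ - sin t • spinField β t‖ ≤ ‖e₃‖ + |sin t| * ‖spinField β t‖ := by
        simpa [norm_smul] using norm_sub_le e₃ (sin t • spinField β t)
    _ ≤ 1 + 1 * 1 := by
        rw [norm_e₃, norm_spinField]; gcongr; exact abs_sin_le_one t
    _ = 2 := by norm_num

lemma norm_chirality_sub_rotE₁_le : ‖chirality β t - rotE₁ (β t)‖ ≤ 2 * |deriv β t| := by
  rw [chirality, add_sub_cancel_left, norm_smul, Real.norm_eq_abs, mul_comm]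
  exact mul_le_mul_of_nonneg_right norm_e₃_sub_sin_smul_spinField_le (abs_nonneg _)

lemma norm_deriv_spinField_le (hβ : DifferentiableAt ℝ β t) :
    ‖deriv (spinField β) t‖ ≤ 2 + |deriv β t| := by
  rw [(hasDerivAt_spinField hβ.hasDerivAt).deriv]
  calc _ ≤ ‖-sin t • rotE₂ (β t)‖ + ‖(cos t * deriv β t) • rotE₁ (β t)‖ + ‖cos t • e₃‖ :=
        (norm_add_le _ _).trans (add_le_add (norm_sub_le _ _) le_rfl)
    _ = |sin t| + |cos t| * |deriv β t| + |cos t| := by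
        simp [norm_smul, norm_rotE₁, norm_rotE₂, norm_e₃]
    _ ≤ 1 + 1 * |deriv β t| + 1 := by
        gcongr
        · exact abs_sin_le_one t
        · exact abs_cos_le_one t
        · exact abs_cos_le_one t
    _ = 2 + |deriv β t| := by ring

lemma norm_deriv_chirality_le (hβ : ContDiff ℝ 2 β) (t : ℝ) :
    ‖deriv (chirality β) t‖ ≤ |deriv β t| * (4 + |deriv β t|) + 2 * |deriv (deriv β) t| := by
  have hβ₁ : DifferentiableAt ℝ β t := hβ.differentiable (by norm_num) t
  have hβ₂ : HasDerivAt (deriv β) (deriv (deriv β) t) t :=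
    ((hβ.deriv' (n := 1)).differentiable (by norm_num) t).hasDerivAt
  set β₁ := deriv β t
  set β₂ := deriv (deriv β) t
  set u := spinField β t
  set u₁ := deriv (spinField β) t
  have hW : HasDerivAt (chirality β)
      (β₁ • rotE₂ (β t) + (β₁ • -(sin t • u₁ + cos t • u) + β₂ • (e₃ - sin t • u))) t :=
    ((hasDerivAt_rotE₁ (β t)).scomp t hβ₁.hasDerivAt).add (hβ₂.smul (((hasDerivAt_sin t).smul
      (hasDerivAt_spinField hβ₁.hasDerivAt).differentiableAt.hasDerivAt).const_sub e₃))
  have hu' : ‖sin t • u₁ + cos t • u‖ ≤ 3 + |β₁| :=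
    calc ‖sin t • u₁ + cos t • u‖ ≤ |sin t| * ‖u₁‖ + |cos t| * ‖u‖ := by
          simpa [norm_smul] using norm_add_le (sin t • u₁) (cos t • u)
      _ ≤ 1 * (2 + |β₁|) + 1 * 1 := by
          rw [norm_spinField]
          gcongr
          · exact abs_sin_le_one t
          · exact norm_deriv_spinField_le hβ₁
          · exact abs_cos_le_one t
      _ = 3 + |β₁| := by ring
  rw [hW.deriv]
  calc _ ≤ ‖β₁ • rotE₂ (β t)‖ + (‖β₁ • -(sin t • u₁ + cos t • u)‖ + ‖β₂ • (e₃ - sin t • u)‖) :=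
        (norm_add_le _ _).trans (add_le_add le_rfl (norm_add_le _ _))
    _ = |β₁| * ‖rotE₂ (β t)‖ + (|β₁| * ‖sin t • u₁ + cos t • u‖ + |β₂| * ‖e₃ - sin t • u‖) := by
        simp only [norm_smul, norm_neg, Real.norm_eq_abs]
    _ ≤ |β₁| * 1 + (|β₁| * (3 + |β₁|) + |β₂| * 2) := by
        rw [norm_rotE₂]
        gcongr
        exact norm_e₃_sub_sin_smul_spinField_le
    _ = |β₁| * (4 + |β₁|) + 2 * |β₂| := by ring

lemma chirality_eventuallyEq {θ : ℝ} (h : β =ᶠ[𝓝 t] fun _ => θ) :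
    chirality β =ᶠ[𝓝 t] fun _ => rotE₁ θ := by
  filter_upwards [h.eventually_nhds] with s (hs : β =ᶠ[𝓝 s] fun _ => θ)
  rw [chirality, hs.self_of_nhds, hs.deriv_eq, deriv_const, zero_smul, add_zero]

end SpinField

noncomputable def angleProfile (α : ℝ) : ℝ → ℝ := fun t => α * smoothTransition (t - 1)

lemma contDiff_angleProfile (α : ℝ) {n : ℕ∞} : ContDiff ℝ n (angleProfile α) :=
  contDiff_const.mul (smoothTransition.contDiff.comp (contDiff_id.sub contDiff_const))

lemma angleProfile_eventuallyEq_zero (α : ℝ) {t : ℝ} (ht : t < 1) :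
    angleProfile α =ᶠ[𝓝 t] fun _ => 0 := by
  filter_upwards [Iio_mem_nhds ht] with s hs
  rw [angleProfile, smoothTransition.zero_of_nonpos (by linarith [Set.mem_Iio.mp hs]), mul_zero]

lemma angleProfile_eventuallyEq (α : ℝ) {t : ℝ} (ht : 2 < t) :
    angleProfile α =ᶠ[𝓝 t] fun _ => α := by
  filter_upwards [Ioi_mem_nhds ht] with s hs
  rw [angleProfile, smoothTransition.one_of_one_le (by linarith [Set.mem_Ioi.mp hs]), mul_one]

lemma deriv_angleProfile (α : ℝ) :
    deriv (angleProfile α) = fun t => α * deriv smoothTransition (t - 1) := by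
  unfold angleProfile
  rw [deriv_const_mul_field']
  funext t
  rw [deriv_comp_sub_const]

lemma deriv_deriv_angleProfile (α : ℝ) :
    deriv (deriv (angleProfile α)) = fun t => α * deriv (deriv smoothTransition) (t - 1) := by
  rw [deriv_angleProfile, deriv_const_mul_field']
  funext t
  rw [deriv_comp_sub_const]

lemma hasCompactSupport_deriv_smoothTransition : HasCompactSupport (deriv smoothTransition) := by
  refine HasCompactSupport.intro (isCompact_Icc (a := 0) (b := 1)) fun t ht => ?_
  rcases not_and_or.mp ht with ht | ht
  · have h : smoothTransition =ᶠ[𝓝 t] fun _ => 0 := by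
      filter_upwards [Iio_mem_nhds (not_le.mp ht)] with s hs
      exact smoothTransition.zero_of_nonpos (le_of_lt hs)
    rw [h.deriv_eq, deriv_const]
  · have h : smoothTransition =ᶠ[𝓝 t] fun _ => 1 := by
      filter_upwards [Ioi_mem_nhds (not_le.mp ht)] with s hs
      exact smoothTransition.one_of_one_le (le_of_lt hs)
    rw [h.deriv_eq, deriv_const]

lemma exists_abs_deriv_smoothTransition_le :
    ∃ D, ∀ t, |deriv smoothTransition t| ≤ D ∧ |deriv (deriv smoothTransition) t| ≤ D := by
  have hc : ContDiff ℝ 2 smoothTransition := smoothTransition.contDiff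
  obtain ⟨D₁, hD₁⟩ := hasCompactSupport_deriv_smoothTransition.exists_bound_of_continuous
    (hc.continuous_deriv (by norm_num))
  obtain ⟨D₂, hD₂⟩ := hasCompactSupport_deriv_smoothTransition.deriv.exists_bound_of_continuous
    ((hc.deriv' (n := 1)).continuous_deriv le_rfl)
  exact ⟨max D₁ D₂, fun t => ⟨(hD₁ t).trans (le_max_left _ _), (hD₂ t).trans (le_max_right _ _)⟩⟩

lemma exists_chirality_angleProfile_bound :
    ∃ L > 0, ∀ α, 0 ≤ α → α ≤ 2 → ∀ t,
      ‖chirality (angleProfile α) t - rotE₁ 0‖ ≤ α * L ∧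
        ‖deriv (chirality (angleProfile α)) t‖ ≤ α * L := by
  obtain ⟨D, hD⟩ := exists_abs_deriv_smoothTransition_le
  have hD0 : 0 ≤ D := (abs_nonneg _).trans (hD 0).1
  refine ⟨D * (6 + 2 * D) + 2 * D + 1, by positivity, fun α hα0 hα2 t => ?_⟩
  set β := angleProfile α
  have hβ : |β t| ≤ α := by
    rw [show β t = α * smoothTransition (t - 1) from rfl, abs_mul, abs_of_nonneg hα0,
      abs_of_nonneg (smoothTransition.nonneg _)]
    exact mul_le_of_le_one_right hα0 (smoothTransition.le_one _)
  have hβ₁ : |deriv β t| ≤ α * D := by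
    rw [deriv_angleProfile, abs_mul, abs_of_nonneg hα0]
    exact mul_le_mul_of_nonneg_left (hD _).1 hα0
  have hβ₂ : |deriv (deriv β) t| ≤ α * D := by
    rw [deriv_deriv_angleProfile, abs_mul, abs_of_nonneg hα0]
    exact mul_le_mul_of_nonneg_left (hD _).2 hα0
  constructor
  · calc ‖chirality β t - rotE₁ 0‖
          ≤ ‖chirality β t - rotE₁ (β t)‖ + ‖rotE₁ (β t) - rotE₁ 0‖ :=
          norm_sub_le_norm_sub_add_norm_sub _ _ _
      _ ≤ 2 * |deriv β t| + |β t - 0| :=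
          add_le_add norm_chirality_sub_rotE₁_le (norm_rotE₁_sub_rotE₁_le _ _)
      _ ≤ α * (D * (6 + 2 * D) + 2 * D + 1) := by
          rw [sub_zero]
          nlinarith [mul_nonneg hα0 (mul_nonneg hD0 (by positivity : (0:ℝ) ≤ 6 + 2 * D))]
  · calc ‖deriv (chirality β) t‖
          ≤ |deriv β t| * (4 + |deriv β t|) + 2 * |deriv (deriv β) t| :=
          norm_deriv_chirality_le (contDiff_angleProfile α) t
      _ ≤ (α * D) * (4 + 2 * D) + 2 * (α * D) := by
          gcongr
          nlinarith
      _ ≤ α * (D * (6 + 2 * D) + 2 * D + 1) := by nlinarith [mul_nonneg hα0 hD0]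

lemma energyDensity_chirality_eq_zero {Q : Set ℝ³} {β : ℝ → ℝ} {t θ : ℝ}
    (h : β =ᶠ[𝓝 t] fun _ => θ) (hθ : rotE₁ θ ∈ Q) :
    energyDensity Q (chirality β t) (deriv (chirality β) t) = 0 := by
  have hW := chirality_eventuallyEq h
  rw [hW.self_of_nhds, hW.deriv_eq, deriv_const]
  exact energyDensity_self (norm_rotE₁ θ) hθ

lemma energyDensity_chirality_angleProfile_eq_zero {Q : Set ℝ³} {α t : ℝ}
    (ht : t ∉ Set.Icc 1 2) (h₀ : rotE₁ 0 ∈ Q) (hα : rotE₁ α ∈ Q) :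
    energyDensity Q (chirality (angleProfile α) t) (deriv (chirality (angleProfile α)) t) = 0 := by
  rw [Set.mem_Icc, not_and_or, not_le, not_le] at ht
  rcases ht with ht | ht
  · exact energyDensity_chirality_eq_zero (angleProfile_eventuallyEq_zero α ht) h₀
  · exact energyDensity_chirality_eq_zero (angleProfile_eventuallyEq α ht) hα

end SpinTransition

open SpinTransition

/-- there is a universal constant `C > 0` such that for every `α ∈ (0, π/2]`,
with `q₁ = (1,0,0)`, `q₂ = (cos α, sin α, 0)`, `Q = {±q₁, ±q₂}` and
`G(x) = dist(x/‖x‖, Q)` (and `G(0)=0`), there is a `C²` spin field whose chirality goes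
from `q₁` to `q₂` with penalized energy at most `C‖q₁ − q₂‖`. -/
theorem stmt11 :
    ∃ C : ℝ, 0 < C ∧ ∀ α ∈ Set.Ioc (0 : ℝ) (Real.pi / 2),
      ∀ q₁ q₂ : EuclideanSpace ℝ (Fin 3), ∀ Q : Set (EuclideanSpace ℝ (Fin 3)),
      ∀ G : EuclideanSpace ℝ (Fin 3) → ℝ,
      q₁ = (WithLp.equiv 2 (Fin 3 → ℝ)).symm ![1, 0, 0] →
      q₂ = (WithLp.equiv 2 (Fin 3 → ℝ)).symm ![Real.cos α, Real.sin α, 0] →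
      Q = {q₁, -q₁, q₂, -q₂} →
      (∀ x : EuclideanSpace ℝ (Fin 3),
        G x = if x = 0 then 0 else Metric.infDist (‖x‖⁻¹ • x) Q) →
      ∃ T : ℝ, 0 < T ∧ ∃ u : ℝ → EuclideanSpace ℝ (Fin 3), ContDiff ℝ 2 u ∧
        (∀ t : ℝ, ‖u t‖ = 1) ∧
        (∀ t : ℝ, t ≤ 0 → cross3 (u t) (deriv u t) = q₁) ∧
        (∀ t : ℝ, T ≤ t → cross3 (u t) (deriv u t) = q₂) ∧
        (∫⁻ t : ℝ, ENNReal.ofReal ((‖cross3 (u t) (deriv u t)‖ ^ 2 - 1) ^ 2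
            + G (cross3 (u t) (deriv u t)) / 2
            + ‖deriv (fun s => cross3 (u s) (deriv u s)) t‖ ^ 2)
          ≤ ENNReal.ofReal (C * ‖q₁ - q₂‖)) := by
  obtain ⟨L, hL, hbound⟩ := exists_chirality_angleProfile_bound
  set K := 2 * L ^ 2 * (2 + 2 * L) ^ 2 + L + 2 * L ^ 2
  refine ⟨2 * K, by positivity, ?_⟩
  rintro α ⟨hα0, hαπ⟩ q₁ q₂ Q G hq₁ hq₂ rfl hG
  obtain rfl : q₁ = rotE₁ 0 := by simp [hq₁, rotE₁_eq]
  obtain rfl : q₂ = rotE₁ α := by rw [hq₂, rotE₁_eq]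
  obtain rfl : G = sphericalPenalty {rotE₁ 0, -rotE₁ 0, rotE₁ α, -rotE₁ α} :=
    -- the two `if`s differ in their `Decidable (x = 0)` instances
    funext fun x => by rw [hG, sphericalPenalty]; congr
  have hα2 : α ≤ 2 := by linarith [pi_le_four]
  have hβ : ContDiff ℝ 2 (angleProfile α) := contDiff_angleProfile α
  refine ⟨3, by norm_num, spinField (angleProfile α), contDiff_spinField hβ,
    norm_spinField _, ?_⟩
  simp only [cross3_spinField_deriv (hβ.differentiable (by norm_num))]
  refine ⟨fun t ht => (chirality_eventuallyEq (angleProfile_eventuallyEq_zero α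
      (by linarith))).self_of_nhds, fun t ht => (chirality_eventuallyEq
      (angleProfile_eventuallyEq α (by linarith))).self_of_nhds, ?_⟩
  calc _ ≤ ENNReal.ofReal (α * K) * ENNReal.ofReal (2 - 1) :=
        lintegral_ofReal_le_of_eq_zero_off_Icc
          (fun t _ => energyDensity_le (norm_rotE₁ 0) (by simp) hα0.le hα2 hL.le
            (hbound α hα0.le hα2 t).1 (hbound α hα0.le hα2 t).2)
          (fun t ht => energyDensity_chirality_angleProfile_eq_zero ht (by simp) (by simp))
    _ ≤ ENNReal.ofReal (2 * K * ‖rotE₁ 0 - rotE₁ α‖) := by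
        have hα := le_two_mul_norm_rotE₁_sub_rotE₁_zero hα0.le (by linarith [pi_pos])
        rw [← ENNReal.ofReal_mul (by positivity), norm_sub_rev]
        refine ENNReal.ofReal_le_ofReal ?_
        have hK : 0 ≤ K := by positivity
        linarith [mul_le_mul_of_nonneg_right hα hK]
end

section
/- Let a < b be real numbers, let w ∈ ℝ³ with ‖w‖ = 1, and let u : (a,b) → ℝ³ be differentiable with ‖u(s)‖ = 1 and u(s) × u'(s) = w for every s ∈ (a,b). Then for all s₁, s₂ ∈ (a,b) one has u(s₁) × u(s₂) = sin(s₂ − s₁) · w. -/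
/-!
Since `‖u‖ = 1`, `u` is orthogonal to `u'`, and then `u × u' = w` forces `u' = w × u`: `u` solves
a linear ODE whose generator `x ↦ w × x` is skew. As `u ⊥ w`, the rotation
`c(s) = cos (s - s₁) • u(s₁) + sin (s - s₁) • (w × u(s₁))` solves the same ODE, and skewness
keeps `‖u - c‖` constant, hence zero. So `u(s₁) × u(s₂) = sin (s₂ - s₁) • u(s₁) × (w × u(s₁))`,
which is `sin (s₂ - s₁) • w`.
-/

open MeasureTheory Filter
open scoped RealInnerProductSpace

open Matrix Real Set Topology

section NormConstant

variable {F : Type*} [NormedAddCommGroup F] [InnerProductSpace ℝ F]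

theorem HasDerivAt.inner_eq_zero_of_eventually_norm_eq {f : ℝ → F} {f' : F} {x r : ℝ}
    (hf : HasDerivAt f f' x) (hr : ∀ᶠ t in 𝓝 x, ‖f t‖ = r) : ⟪f x, f'⟫ = 0 := by
  have hconst : HasDerivAt (‖f ·‖ ^ 2) 0 x :=
    (hasDerivAt_const x (r ^ 2)).congr_of_eventuallyEq (hr.mono fun t ht => congrArg (· ^ 2) ht)
  simpa using hf.norm_sq.unique hconst

theorem IsOpen.norm_eq_of_inner_eq_zero {s : Set ℝ} (hs : IsOpen s) (hs' : IsPreconnected s)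
    {f f' : ℝ → F} (hf : ∀ t ∈ s, HasDerivAt f (f' t) t) (hf' : ∀ t ∈ s, ⟪f t, f' t⟫ = 0)
    {x y : ℝ} (hx : x ∈ s) (hy : y ∈ s) : ‖f x‖ = ‖f y‖ := by
  have hsq : ∀ t ∈ s, HasDerivAt (‖f ·‖ ^ 2) 0 t := fun t ht => by
    simpa [hf' t ht] using (hf t ht).norm_sq
  have hsq_eq := hs.is_const_of_deriv_eq_zero hs'
    (fun t ht => (hsq t ht).differentiableAt.differentiableWithinAt) (fun t ht => (hsq t ht).deriv)
    hx hy
  exact (pow_left_inj₀ (norm_nonneg _) (norm_nonneg _) two_ne_zero).mp hsq_eq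

end NormConstant

theorem LinearMap.hasDerivAt_cos_smul_add_sin_smul {E : Type*} [NormedAddCommGroup E]
    [NormedSpace ℝ E] (A : E →ₗ[ℝ] E) {x : E} (hA : A (A x) = -x) (t₀ t : ℝ) :
    HasDerivAt (fun t => cos (t - t₀) • x + sin (t - t₀) • A x)
      (A (cos (t - t₀) • x + sin (t - t₀) • A x)) t := by
  have hcos : HasDerivAt (fun t => cos (t - t₀)) (-sin (t - t₀)) t := by
    simpa using ((hasDerivAt_id t).sub_const t₀).cos
  have hsin : HasDerivAt (fun t => sin (t - t₀)) (cos (t - t₀)) t := by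
    simpa using ((hasDerivAt_id t).sub_const t₀).sin
  refine ((hcos.smul_const x).add (hsin.smul_const (A x))).congr_deriv ?_
  rw [map_add, map_smul, map_smul, hA, smul_neg, neg_smul, add_comm]

theorem EuclideanSpace.real_inner_eq_dotProduct {ι : Type*} [Fintype ι]
    (x y : EuclideanSpace ℝ ι) : ⟪x, y⟫ = x.ofLp ⬝ᵥ y.ofLp := by
  simp [EuclideanSpace.inner_eq_star_dotProduct, dotProduct_comm]

noncomputable def cross3Left (w : EuclideanSpace ℝ (Fin 3)) :
    EuclideanSpace ℝ (Fin 3) →ₗ[ℝ] EuclideanSpace ℝ (Fin 3) :=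
  (WithLp.linearEquiv 2 ℝ (Fin 3 → ℝ)).symm.toLinearMap ∘ₗ crossProduct w.ofLp ∘ₗ
    (WithLp.linearEquiv 2 ℝ (Fin 3 → ℝ)).toLinearMap

theorem cross3Left_apply (w x : EuclideanSpace ℝ (Fin 3)) : cross3Left w x = cross3 w x := rfl

theorem cross3_self (x : EuclideanSpace ℝ (Fin 3)) : cross3 x x = 0 := by
  simp [cross3, cross_self]

theorem cross3_anticomm (x y : EuclideanSpace ℝ (Fin 3)) : cross3 x y = -cross3 y x := by
  rw [cross3, cross3, ← cross_anticomm]; rfl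

theorem inner_self_cross3 (x y : EuclideanSpace ℝ (Fin 3)) : ⟪x, cross3 x y⟫ = 0 := by
  rw [EuclideanSpace.real_inner_eq_dotProduct]; exact dot_self_cross _ _

theorem inner_cross3_self (x y : EuclideanSpace ℝ (Fin 3)) : ⟪y, cross3 x y⟫ = 0 := by
  rw [EuclideanSpace.real_inner_eq_dotProduct]; exact dot_cross_self _ _

theorem cross3_cross3 (x y z : EuclideanSpace ℝ (Fin 3)) :
    cross3 x (cross3 y z) = ⟪x, z⟫ • y - ⟪x, y⟫ • z := by
  simp only [EuclideanSpace.real_inner_eq_dotProduct, dotProduct_comm x.ofLp y.ofLp]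
  exact congrArg (WithLp.toLp 2) (cross_cross_eq_smul_sub_smul' _ _ _)

theorem cross3_cross3_of_inner_eq_zero {p q : EuclideanSpace ℝ (Fin 3)} (hp : ‖p‖ = 1)
    (hpq : ⟪p, q⟫ = 0) : cross3 (cross3 p q) p = q := by
  rw [cross3_anticomm, cross3_cross3, hpq, real_inner_self_eq_norm_sq, hp]
  simp

theorem stmt13_general (a b : ℝ) (w : EuclideanSpace ℝ (Fin 3)) (hw : ‖w‖ = 1)
    (u : ℝ → EuclideanSpace ℝ (Fin 3))
    (hu : ∀ s ∈ Set.Ioo a b, ‖u s‖ = 1)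
    (hdiff : ∀ s ∈ Set.Ioo a b, DifferentiableAt ℝ u s)
    (hchir : ∀ s ∈ Set.Ioo a b, cross3 (u s) (deriv u s) = w) :
    ∀ s₁ ∈ Set.Ioo a b, ∀ s₂ ∈ Set.Ioo a b,
      cross3 (u s₁) (u s₂) = Real.sin (s₂ - s₁) • w := by
  intro s₁ hs₁ s₂ hs₂
  have hode : ∀ s ∈ Ioo a b, HasDerivAt u (cross3 w (u s)) s := fun s hs => by
    have hderiv := (hdiff s hs).hasDerivAt
    have hperp := hderiv.inner_eq_zero_of_eventually_norm_eq
      (eventually_of_mem (isOpen_Ioo.mem_nhds hs) hu)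
    rwa [← hchir s hs, cross3_cross3_of_inner_eq_zero (hu s hs) hperp]
  have huw : ⟪u s₁, w⟫ = 0 := by
    rw [← hchir s₁ hs₁, inner_self_cross3]
  have hrot : cross3Left w (cross3Left w (u s₁)) = -u s₁ := by
    rw [cross3Left_apply, cross3Left_apply, cross3_cross3, real_inner_comm, huw,
      real_inner_self_eq_norm_sq, hw]
    simp
  set c := fun t => cos (t - s₁) • u s₁ + sin (t - s₁) • cross3Left w (u s₁)
  have hc := (cross3Left w).hasDerivAt_cos_smul_add_sin_smul hrot s₁
  have huc : u s₂ = c s₂ := by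
    have hnorm := isOpen_Ioo.norm_eq_of_inner_eq_zero isPreconnected_Ioo
      (fun t ht => (hode t ht).sub (hc t)) (fun t _ => ?_) hs₂ hs₁
    · simpa [c, sub_eq_zero] using hnorm
    · show ⟪u t - c t, cross3Left w (u t) - cross3Left w (c t)⟫ = 0
      rw [← map_sub]
      exact inner_cross3_self w _
  rw [huc, ← cross3Left_apply, map_add, map_smul, map_smul]
  simp [cross3Left_apply, cross3_self, cross3_cross3, hu s₁ hs₁, huw]

/-- if a differentiable unit field `u` on `(a,b)` has constant unit
chirality `u × u' ≡ w`, then `u(s₁) × u(s₂) = sin(s₂ − s₁) · w` for all `s₁, s₂ ∈ (a,b)`. -/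
theorem stmt13 (a b : ℝ) (hab : a < b) (w : EuclideanSpace ℝ (Fin 3)) (hw : ‖w‖ = 1)
    (u : ℝ → EuclideanSpace ℝ (Fin 3))
    (hu : ∀ s ∈ Set.Ioo a b, ‖u s‖ = 1)
    (hdiff : ∀ s ∈ Set.Ioo a b, DifferentiableAt ℝ u s)
    (hchir : ∀ s ∈ Set.Ioo a b, cross3 (u s) (deriv u s) = w) :
    ∀ s₁ ∈ Set.Ioo a b, ∀ s₂ ∈ Set.Ioo a b,
      cross3 (u s₁) (u s₂) = Real.sin (s₂ - s₁) • w :=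
  stmt13_general a b w hw u hu hdiff hchir
end

section
/- Let J ∈ (0,4] and φ := arccos(J/4), and define u : ℤ → ℝ³ by u^i := (cos(φ·i), sin(φ·i), 0). Then ‖u^i‖ = 1 and u^i − (J/2)·u^{i+1} + u^{i+2} = 0 for every i ∈ ℤ; in particular every term ‖u^i − (J/2)u^{i+1} + u^{i+2}‖² of the renormalized frustrated-chain energy vanishes, so the helix u is a ground state. -/
open MeasureTheory Filter
open scoped RealInnerProductSpace

/-- the canonical helix with angle `φ = arccos(J/4)` consists of unit vectors
and annihilates every term of the renormalized frustrated-chain energy, hence it is a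
ground state. -/
theorem stmt15 (J : ℝ) (hJ : J ∈ Set.Ioc (0 : ℝ) 4) (φ : ℝ) (hφ : φ = Real.arccos (J / 4))
    (u : ℤ → EuclideanSpace ℝ (Fin 3))
    (hu : ∀ i : ℤ, u i = (WithLp.equiv 2 (Fin 3 → ℝ)).symm
      ![Real.cos (φ * (i : ℝ)), Real.sin (φ * (i : ℝ)), 0]) :
    (∀ i : ℤ, ‖u i‖ = 1) ∧
    (∀ i : ℤ, u i - (J / 2) • u (i + 1) + u (i + 2) = 0) ∧
    (∀ i : ℤ, ‖u i - (J / 2) • u (i + 1) + u (i + 2)‖ ^ 2 = 0) := by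
  have hc : Real.cos φ = J / 4 := by
    rw [hφ]; exact Real.cos_arccos (by linarith [hJ.1]) (by linarith [hJ.2])
  have hpy := Real.sin_sq_add_cos_sq φ
  have hzero : ∀ i : ℤ, u i - (J / 2) • u (i + 1) + u (i + 2) = 0 := by
    intro i
    have key : ∀ x : ℝ,
        Real.cos x - J / 2 * Real.cos (x + φ) + Real.cos (x + φ + φ) = 0 ∧
        Real.sin x - J / 2 * Real.sin (x + φ) + Real.sin (x + φ + φ) = 0 := by
      intro x
      constructor
      · simp only [Real.cos_add, Real.sin_add]
        linear_combination (2*(Real.cos x*Real.cos φ - Real.sin x*Real.sin φ))*hc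
            - Real.cos x*hpy
      · simp only [Real.cos_add, Real.sin_add]
        linear_combination (2*(Real.sin x*Real.cos φ + Real.cos x*Real.sin φ))*hc
            - Real.sin x*hpy
    ext j
    have h2 : φ * ((i : ℝ) + 1) = φ * i + φ := by ring
    have h3 : φ * ((i : ℝ) + 2) = φ * i + φ + φ := by ring
    fin_cases j
    · simpa [hu, PiLp.add_apply, PiLp.sub_apply, PiLp.smul_apply, h2, h3]
        using (key (φ * i)).1
    · simpa [hu, PiLp.add_apply, PiLp.sub_apply, PiLp.smul_apply, h2, h3]
        using (key (φ * i)).2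
    · simp [hu, PiLp.add_apply, PiLp.sub_apply, PiLp.smul_apply]
  refine ⟨fun i => ?_, hzero, fun i => by simp [hzero i]⟩
  have h1 : ‖u i‖ ^ 2 = 1 := by
    rw [hu i, EuclideanSpace.norm_eq]
    rw [Real.sq_sqrt (by positivity)]
    simp only [Fin.sum_univ_three]
    simp [Real.sin_sq_add_cos_sq (φ * i)]
  nlinarith [norm_nonneg (u i)]
end

section
/- Let J ∈ (0,4] and let v : ℤ → ℝ³ satisfy ‖v^i‖ = 1 for all i and the recurrence J·v^{i+1} = 2(v^i + v^{i+2}) for every i ∈ ℤ. Then for every i ∈ ℤ one has ⟨v^i, v^{i+2}⟩ = J²/8 − 1 and ⟨v^i, v^{i+1}⟩ = J/4. -/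
open MeasureTheory Filter
open scoped RealInnerProductSpace

/-- any unit-vector solution of the ground-state recurrence
`J v^{i+1} = 2(v^i + v^{i+2})` satisfies `⟨v^i, v^{i+2}⟩ = J²/8 − 1` and
`⟨v^i, v^{i+1}⟩ = J/4`. -/
theorem stmt16 (J : ℝ) (hJ : J ∈ Set.Ioc (0 : ℝ) 4)
    (v : ℤ → EuclideanSpace ℝ (Fin 3)) (hv : ∀ i : ℤ, ‖v i‖ = 1)
    (hrec : ∀ i : ℤ, J • v (i + 1) = (2 : ℝ) • (v i + v (i + 2))) :
    ∀ i : ℤ, ⟪v i, v (i + 2)⟫ = J ^ 2 / 8 - 1 ∧ ⟪v i, v (i + 1)⟫ = J / 4 := by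
  intro i
  have h := hrec i
  have hJ0 : 0 < J := hJ.1
  have hself : ∀ j : ℤ, ⟪v j, v j⟫ = 1 := fun j => by
    rw [real_inner_self_eq_norm_sq, hv j]; norm_num
  have hb : ⟪v i, v (i + 2)⟫ = J ^ 2 / 8 - 1 := by
    have hn : ‖J • v (i + 1)‖ ^ 2 = ‖(2 : ℝ) • (v i + v (i + 2))‖ ^ 2 := by rw [h]
    rw [norm_smul, norm_smul, hv] at hn
    have hsq : ‖v i + v (i + 2)‖ ^ 2 =
        ‖v i‖ ^ 2 + 2 * ⟪v i, v (i + 2)⟫ + ‖v (i + 2)‖ ^ 2 := norm_add_sq_real _ _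
    rw [hv, hv] at hsq
    have habs : |J| = J := abs_of_pos hJ0
    simp only [Real.norm_eq_abs, habs, abs_two, mul_pow] at hn
    nlinarith [hn, hsq]
  refine ⟨hb, ?_⟩
  have ha : ⟪v i, J • v (i + 1)⟫ = ⟪v i, (2 : ℝ) • (v i + v (i + 2))⟫ := by rw [h]
  rw [real_inner_smul_right, real_inner_smul_right, inner_add_right, hself, hb] at ha
  have : J * ⟪v i, v (i + 1)⟫ = J * (J / 4) := by ring_nf; ring_nf at ha; linarith
  exact mul_left_cancel₀ (ne_of_gt hJ0) this
end

section
/- Let J ∈ (0,4] and φ := arccos(J/4). If v : ℤ → ℝ³ satisfies ‖v^i‖ = 1 for all i and J·v^{i+1} = 2(v^i + v^{i+2}) for every i ∈ ℤ, then there exists a rotation R ∈ SO(3) (a real 3×3 matrix with RᵀR = I and det R = 1) such that v^i = R·(cos(φ·i), sin(φ·i), 0) for every i ∈ ℤ. That is, every ground state of the frustrated chain is a fixed rotation of the canonical helix with angle φ. -/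
open MeasureTheory Filter
open scoped RealInnerProductSpace

/-!
Write `c = cos φ = J / 4`, so that the recurrence reads `v (i + 2) = 2c • v (i + 1) - v i`.
Taking squared norms and using `‖v i‖ = 1` gives `c * (c - ⟪v i, v (i + 1)⟫) = 0`, hence
`⟪v i, v (i + 1)⟫ = c` as `c ≠ 0`. Then `v 1 - c • v 0` is orthogonal to `a = v 0` and has length
`sin φ`, so `v 1 = cos φ • a + sin φ • b` for a unit vector `b ⊥ a` (any such `b` when `J = 4`).
The helix `cos (φ i) • a + sin (φ i) • b` satisfies the same two-step recurrence with the same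
initial values, so it is `v`; and `a`, `b`, `a ⨯₃ b` are the columns of a rotation.
-/

open Module Matrix

section Recurrence

variable {R M : Type*} [Ring R] [AddCommGroup M] [Module R M]

theorem eq_zero_of_add_two_add_eq_smul {c : R} {d : ℤ → M}
    (hd : ∀ n, d (n + 2) + d n = c • d (n + 1)) (h0 : d 0 = 0) (h1 : d 1 = 0) (n : ℤ) :
    d n = 0 := by
  suffices ∀ n : ℤ, d n = 0 ∧ d (n + 1) = 0 from (this n).1
  intro n
  induction n using Int.induction_on with
  | zero => exact ⟨h0, h1⟩
  | succ k ih =>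
    refine ⟨ih.2, ?_⟩
    rw [add_assoc, one_add_one_eq_two, eq_sub_of_add_eq (hd k), ih.1, ih.2, smul_zero, sub_zero]
  | pred k ih =>
    have h := hd (-k - 1)
    rw [show -(k : ℤ) - 1 + 2 = -k + 1 by ring, show -(k : ℤ) - 1 + 1 = -k by ring] at h
    rw [sub_add_cancel]
    refine ⟨?_, ih.1⟩
    rw [eq_sub_of_add_eq' h, ih.1, ih.2, smul_zero, sub_zero]

end Recurrence

section Helix

variable {M : Type*} [AddCommGroup M] [Module ℝ M]

noncomputable def helix (φ : ℝ) (a b : M) (n : ℤ) : M :=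
  Real.cos (φ * n) • a + Real.sin (φ * n) • b

theorem helix_add_two_add (φ : ℝ) (a b : M) (n : ℤ) :
    helix φ a b (n + 2) + helix φ a b n = (2 * Real.cos φ) • helix φ a b (n + 1) := by
  have h2 : φ * ((n + 2 : ℤ) : ℝ) = φ * ((n + 1 : ℤ) : ℝ) + φ := by push_cast; ring
  have h0 : φ * (n : ℝ) = φ * ((n + 1 : ℤ) : ℝ) - φ := by push_cast; ring
  rw [helix, helix, helix, h2, h0, Real.cos_add, Real.cos_sub, Real.sin_add, Real.sin_sub]
  module

theorem eq_helix_of_add_two_add {φ : ℝ} {a b : M} {v : ℤ → M}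
    (hv : ∀ n, v (n + 2) + v n = (2 * Real.cos φ) • v (n + 1))
    (h0 : v 0 = a) (h1 : v 1 = Real.cos φ • a + Real.sin φ • b) (n : ℤ) :
    v n = helix φ a b n := by
  refine sub_eq_zero.1 <| eq_zero_of_add_two_add_eq_smul (c := 2 * Real.cos φ)
    (d := v - helix φ a b) (fun n => ?_) ?_ ?_ n
  · simp only [Pi.sub_apply]
    linear_combination (norm := module) hv n - helix_add_two_add φ a b n
  · simp [helix, h0]
  · simp [helix, h1]

end Helix

section InnerProductSpace

variable {E : Type*} [NormedAddCommGroup E] [InnerProductSpace ℝ E]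

theorem inner_add_one_eq_of_add_two_add {c : ℝ} (hc : c ≠ 0) {v : ℤ → E} (hv : ∀ i, ‖v i‖ = 1)
    (hrec : ∀ i, v (i + 2) + v i = (2 * c) • v (i + 1)) (i : ℤ) :
    ⟪v i, v (i + 1)⟫ = c := by
  have h := congrArg (‖·‖ ^ 2) (eq_sub_of_add_eq (hrec i))
  simp only [norm_sub_sq_real, norm_smul, real_inner_smul_right, real_inner_comm (v i), hv,
    Real.norm_eq_abs, mul_one, sq_abs] at h
  have : c * (c - ⟪v i, v (i + 1)⟫) = 0 := by linear_combination -h / 4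
  linarith [(mul_eq_zero.1 this).resolve_left hc]

theorem exists_norm_eq_one_inner_eq_zero [FiniteDimensional ℝ E] (hE : 2 ≤ finrank ℝ E) (a : E) :
    ∃ b : E, ‖b‖ = 1 ∧ ⟪a, b⟫ = 0 := by
  have hspan : finrank ℝ (ℝ ∙ a) ≤ 1 := by
    simpa using finrank_span_le_card ({a} : Set E)
  have hperp : (ℝ ∙ a)ᗮ ≠ ⊥ := by
    rw [← Submodule.finrank_eq_zero.ne]
    have := (ℝ ∙ a).finrank_add_finrank_orthogonal
    omega
  obtain ⟨x, hx, hx0⟩ := Submodule.exists_mem_ne_zero_of_ne_bot hperp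
  refine ⟨(‖x‖⁻¹ : ℝ) • x, norm_smul_inv_norm hx0, ?_⟩
  rw [real_inner_smul_right, Submodule.mem_orthogonal_singleton_iff_inner_right.1 hx, mul_zero]

theorem exists_norm_eq_one_inner_eq_zero_eq_norm_smul [FiniteDimensional ℝ E]
    (hE : 2 ≤ finrank ℝ E) {a w : E} (hw : ⟪a, w⟫ = 0) :
    ∃ b : E, ‖b‖ = 1 ∧ ⟪a, b⟫ = 0 ∧ w = ‖w‖ • b := by
  by_cases h : w = 0
  · obtain ⟨b, hb, hab⟩ := exists_norm_eq_one_inner_eq_zero hE a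
    exact ⟨b, hb, hab, by simp [h]⟩
  · refine ⟨(‖w‖⁻¹ : ℝ) • w, norm_smul_inv_norm h, ?_, ?_⟩
    · rw [real_inner_smul_right, hw, mul_zero]
    · rw [smul_smul, mul_inv_cancel₀ (norm_ne_zero_iff.2 h), one_smul]

theorem exists_eq_helix_of_add_two_add [FiniteDimensional ℝ E] (hE : 2 ≤ finrank ℝ E) {φ : ℝ}
    (hcos : Real.cos φ ≠ 0) (hsin : 0 ≤ Real.sin φ) {v : ℤ → E} (hv : ∀ i, ‖v i‖ = 1)
    (hrec : ∀ i, v (i + 2) + v i = (2 * Real.cos φ) • v (i + 1)) :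
    ∃ a b : E, ‖a‖ = 1 ∧ ‖b‖ = 1 ∧ ⟪a, b⟫ = 0 ∧ ∀ n, v n = helix φ a b n := by
  set c := Real.cos φ
  have h01 : ⟪v 0, v 1⟫ = c := by simpa using inner_add_one_eq_of_add_two_add hcos hv hrec 0
  have h00 : ⟪v 0, v 0⟫ = 1 := by rw [real_inner_self_eq_norm_sq, hv, one_pow]
  have horth : ⟪v 0, v 1 - c • v 0⟫ = 0 := by
    rw [inner_sub_right, real_inner_smul_right, h01, h00, mul_one, sub_self]
  have hnorm : ‖v 1 - c • v 0‖ = Real.sin φ := by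
    rw [← sq_eq_sq₀ (norm_nonneg _) hsin, norm_sub_sq_real, norm_smul, real_inner_smul_right,
      real_inner_comm, h01, hv, hv, mul_one, Real.norm_eq_abs, sq_abs, Real.sin_sq]
    ring
  obtain ⟨b, hb, hab, hw⟩ := exists_norm_eq_one_inner_eq_zero_eq_norm_smul hE horth
  refine ⟨v 0, b, hv 0, hb, hab, eq_helix_of_add_two_add hrec rfl ?_⟩
  rw [← hnorm, ← hw, add_sub_cancel]

end InnerProductSpace

theorem exists_rotation_mulVec_eq (a b : Fin 3 → ℝ) (ha : a ⬝ᵥ a = 1) (hb : b ⬝ᵥ b = 1)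
    (hab : a ⬝ᵥ b = 0) :
    ∃ R : Matrix (Fin 3) (Fin 3) ℝ, Rᵀ * R = 1 ∧ R.det = 1 ∧
      ∀ x y : ℝ, R *ᵥ ![x, y, 0] = x • a + y • b := by
  have hc : (a ⨯₃ b) ⬝ᵥ (a ⨯₃ b) = 1 := by
    rw [cross_dot_cross, ha, hb, dotProduct_comm b a, hab]; ring
  let M : Matrix (Fin 3) (Fin 3) ℝ := ![a, b, a ⨯₃ b]
  refine ⟨Mᵀ, ?_, ?_, fun x y => ?_⟩
  · ext i j
    change M i ⬝ᵥ M j = (1 : Matrix (Fin 3) (Fin 3) ℝ) i j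
    fin_cases i <;> fin_cases j <;>
      simp [M, ha, hb, hab, hc, dotProduct_comm b a, dotProduct_comm (a ⨯₃ b), dot_self_cross,
        dot_cross_self]
  · rw [det_transpose, ← triple_product_eq_det, triple_product_permutation,
      triple_product_permutation, hc]
  · rw [mulVec_transpose]
    ext k
    simp [M, vecMul, dotProduct, Fin.sum_univ_three]

/-- every ground state of the frustrated chain (unit-vector solution of
`J v^{i+1} = 2(v^i + v^{i+2})`) is a fixed rotation `R ∈ SO(3)` of the canonical helix
with angle `φ = arccos(J/4)`. -/
theorem stmt17 (J : ℝ) (hJ : J ∈ Set.Ioc (0 : ℝ) 4) (φ : ℝ) (hφ : φ = Real.arccos (J / 4))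
    (v : ℤ → EuclideanSpace ℝ (Fin 3)) (hv : ∀ i : ℤ, ‖v i‖ = 1)
    (hrec : ∀ i : ℤ, J • v (i + 1) = (2 : ℝ) • (v i + v (i + 2))) :
    ∃ R : Matrix (Fin 3) (Fin 3) ℝ, R.transpose * R = 1 ∧ R.det = 1 ∧
      ∀ i : ℤ, v i = (WithLp.equiv 2 (Fin 3 → ℝ)).symm
        (R.mulVec ![Real.cos (φ * (i : ℝ)), Real.sin (φ * (i : ℝ)), 0]) := by
  obtain ⟨hJ0, hJ4⟩ := hJ
  have hcos : Real.cos φ = J / 4 := by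
    rw [hφ, Real.cos_arccos (by linarith) (by linarith)]
  have hsin : 0 ≤ Real.sin φ := by
    rw [hφ, Real.sin_arccos]
    exact Real.sqrt_nonneg _
  have hrec' : ∀ i, v (i + 2) + v i = (2 * Real.cos φ) • v (i + 1) := fun i => by
    rw [hcos]
    linear_combination (norm := module) (-(2 : ℝ)⁻¹) • hrec i
  obtain ⟨a, b, ha, hb, hab, hhelix⟩ := exists_eq_helix_of_add_two_add
    (by simp) (by rw [hcos]; positivity) hsin hv hrec'
  have hdot (x y : EuclideanSpace ℝ (Fin 3)) : x.ofLp ⬝ᵥ y.ofLp = ⟪x, y⟫ := by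
    rw [EuclideanSpace.inner_eq_star_dotProduct, star_trivial, dotProduct_comm]
  obtain ⟨R, hRR, hdet, hR⟩ := exists_rotation_mulVec_eq a.ofLp b.ofLp
    (by rw [hdot, real_inner_self_eq_norm_sq, ha, one_pow])
    (by rw [hdot, real_inner_self_eq_norm_sq, hb, one_pow]) (by rw [hdot, hab])
  exact ⟨R, hRR, hdet, fun i => by simp [hR, hhelix i, helix]⟩
end
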